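/- arXiv:2208.03160 — 7 statements merged into one kernel-verified Lean document; each statement's English description precedes it below -/
import Mathlib

section
/- Let P be a real n×m matrix and let D be the m×m diagonal matrix whose i-th diagonal entry is D_ii = (∑_{j=1}^m |(PᵀP)_{ij}|)^{-1/2} when ∑_{j=1}^m |(PᵀP)_{ij}| ≠ 0, and D_ii = 0 otherwise. Then the spectral norm of the matrix product PD is at most 1, i.e. for every v ∈ ℝ^m one has ‖PDv‖₂ ≤ ‖v‖₂. -/
open Matrix BigOperators

/-- **Theorem 1 (AOL rescaling bound).** For a real `n × m` matrix `P` and the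
diagonal matrix `D` with `D i i = (∑ j, |(PᵀP) i j|)^(-1/2)` (and `0` when the
row sum vanishes), the spectral norm of `P * D` is at most `1`, i.e. for every
`v ∈ ℝ^m` one has `‖P D v‖₂ ≤ ‖v‖₂`. -/
theorem aol_spectral_norm_bound {n m : ℕ}
    (P : Matrix (Fin n) (Fin m) ℝ)
    (D : Matrix (Fin m) (Fin m) ℝ)
    (hD : D = Matrix.diagonal (fun i =>
      if (∑ j, |(Pᵀ * P) i j|) ≠ 0
        then (∑ j, |(Pᵀ * P) i j|) ^ (-(1 : ℝ) / 2)
        else 0)) :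
    ∀ v : Fin m → ℝ,
      Real.sqrt (∑ i, ((P * D).mulVec v i) ^ 2) ≤ Real.sqrt (∑ i, (v i) ^ 2) := by
  intro v
  set Q : Matrix (Fin m) (Fin m) ℝ := Pᵀ * P with hQ
  set s : Fin m → ℝ := fun i => ∑ j, |Q i j| with hs
  set d : Fin m → ℝ := fun i => if s i ≠ 0 then (s i) ^ (-(1:ℝ)/2) else 0 with hd
  have hDd : D = Matrix.diagonal d := hD
  have hsnn : ∀ i, 0 ≤ s i := fun i => Finset.sum_nonneg fun j _ => abs_nonneg _
  have hkey : ∀ i, s i * (d i)^2 ≤ 1 := by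
    intro i
    by_cases h : s i = 0
    · simp [hd, h]
    · have hpos : 0 < s i := (hsnn i).lt_of_ne (Ne.symm h)
      have hsq : (d i)^2 = (s i)⁻¹ := by
        simp only [hd, if_pos h]
        rw [← Real.rpow_natCast ((s i) ^ (-(1:ℝ)/2)) 2, ← Real.rpow_mul hpos.le]
        norm_num [Real.rpow_neg_one]
      rw [hsq, mul_inv_cancel₀ h]
  set w : Fin m → ℝ := fun i => d i * v i with hw
  have hDv : D.mulVec v = w := by
    rw [hDd]
    ext i
    simp [Matrix.mulVec_diagonal, hw]
  have hwv : (P * D).mulVec v = P.mulVec w := by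
    rw [← hDv, Matrix.mulVec_mulVec]
  have hQsymm : ∀ k l, Q l k = Q k l := by
    intro k l
    simp [hQ, Matrix.mul_apply, Matrix.transpose_apply, mul_comm]
  have expand : ∑ i, (P.mulVec w i)^2 = ∑ k, ∑ l, Q k l * (w k * w l) := by
    simp only [Matrix.mulVec, dotProduct, hQ, Matrix.mul_apply,
      Matrix.transpose_apply, sq, Finset.sum_mul_sum, Finset.sum_mul]
    rw [Finset.sum_comm]
    refine Finset.sum_congr rfl fun k _ => ?_
    rw [Finset.sum_comm]
    refine Finset.sum_congr rfl fun l _ => ?_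
    rw [Finset.mul_sum]
    exact Finset.sum_congr rfl fun i _ => by ring
  have bound1 : ∑ k, ∑ l, Q k l * (w k * w l) ≤ ∑ k, ∑ l, |Q k l| * ((w k)^2 + (w l)^2) / 2 := by
    refine Finset.sum_le_sum fun k _ => Finset.sum_le_sum fun l _ => ?_
    have h1 : Q k l * (w k * w l) ≤ |Q k l| * (|w k| * |w l|) := by
      calc Q k l * (w k * w l) ≤ |Q k l * (w k * w l)| := le_abs_self _
        _ = |Q k l| * (|w k| * |w l|) := by rw [abs_mul, abs_mul]
    have h2 : |w k| * |w l| ≤ ((w k)^2 + (w l)^2) / 2 := by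
      nlinarith [sq_nonneg (|w k| - |w l|), sq_abs (w k), sq_abs (w l)]
    calc Q k l * (w k * w l) ≤ |Q k l| * (((w k)^2 + (w l)^2) / 2) :=
          h1.trans (mul_le_mul_of_nonneg_left h2 (abs_nonneg _))
      _ = |Q k l| * ((w k)^2 + (w l)^2) / 2 := by ring
  have eq2 : ∑ k, ∑ l, |Q k l| * ((w k)^2 + (w l)^2) / 2 = ∑ k, s k * (w k)^2 := by
    have h1 : ∀ k l, |Q k l| * ((w k)^2 + (w l)^2) / 2
        = |Q k l| * (w k)^2 / 2 + |Q k l| * (w l)^2 / 2 := by intro k l; ring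
    simp only [h1, Finset.sum_add_distrib]
    have h2 : ∑ k, ∑ l, |Q k l| * (w l)^2 / 2 = ∑ k, ∑ l, |Q k l| * (w k)^2 / 2 := by
      rw [Finset.sum_comm]
      refine Finset.sum_congr rfl fun k _ => Finset.sum_congr rfl fun l _ => ?_
      rw [hQsymm k l]
    rw [h2, ← Finset.sum_add_distrib]
    refine Finset.sum_congr rfl fun k _ => ?_
    rw [← Finset.sum_add_distrib]
    simp only [hs]
    rw [Finset.sum_mul]
    refine Finset.sum_congr rfl fun l _ => by ring
  have bound3 : ∑ k, s k * (w k)^2 ≤ ∑ k, (v k)^2 := by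
    refine Finset.sum_le_sum fun k _ => ?_
    have : s k * (w k)^2 = (s k * (d k)^2) * (v k)^2 := by simp [hw]; ring
    rw [this]
    calc (s k * (d k)^2) * (v k)^2 ≤ 1 * (v k)^2 :=
          mul_le_mul_of_nonneg_right (hkey k) (sq_nonneg _)
      _ = (v k)^2 := one_mul _
  apply Real.sqrt_le_sqrt
  rw [hwv, expand]
  exact bound1.trans (le_of_eq eq2) |>.trans bound3
end

section
/- Let P be a real n×m matrix and let D be the m×m diagonal matrix whose i-th diagonal entry is D_ii = (∑_{j=1}^m |(PᵀP)_{ij}|)^{-1/2} when ∑_{j=1}^m |(PᵀP)_{ij}| ≠ 0, and D_ii = 0 otherwise. Then for every unit vector v ∈ ℝ^m (‖v‖₂ = 1), one has vᵀ Dᵀ Pᵀ P D v ≤ ∑_{i=1}^m v_i² = 1. -/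
open Matrix BigOperators

/-- For a real `n × m` matrix `P` and the AOL diagonal rescaling matrix `D`
with `D i i = (∑ j, |(PᵀP) i j|)^(-1/2)` (and `0` when the row sum vanishes),
every unit vector `v ∈ ℝ^m` (i.e. `∑ i, v i ^ 2 = 1`) satisfies
`vᵀ Dᵀ Pᵀ P D v ≤ ∑ i, v i ^ 2 = 1`. -/
theorem aol_quadratic_form_le_one {n m : ℕ}
    (P : Matrix (Fin n) (Fin m) ℝ)
    (D : Matrix (Fin m) (Fin m) ℝ)
    (hD : D = Matrix.diagonal (fun i =>
      if (∑ j, |(Pᵀ * P) i j|) ≠ 0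
        then (∑ j, |(Pᵀ * P) i j|) ^ (-(1 : ℝ) / 2)
        else 0))
    (v : Fin m → ℝ) (hv : ∑ i, (v i) ^ 2 = 1) :
    v ⬝ᵥ (Dᵀ * Pᵀ * P * D).mulVec v ≤ ∑ i, (v i) ^ 2 := by
  set M : Matrix (Fin m) (Fin m) ℝ := Pᵀ * P with hM
  set s : Fin m → ℝ := fun i => ∑ j, |M i j| with hs
  set d : Fin m → ℝ := fun i => if s i ≠ 0 then s i ^ (-(1:ℝ)/2) else 0 with hd
  have hDd : D = Matrix.diagonal d := hD
  have hs0 : ∀ i, 0 ≤ s i := fun i => Finset.sum_nonneg fun j _ => abs_nonneg _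
  have hMsymm : ∀ i j, M i j = M j i := by
    intro i j
    have h : Mᵀ = M := by
      rw [hM, Matrix.transpose_mul, Matrix.transpose_transpose]
    calc M i j = Mᵀ j i := rfl
      _ = M j i := by rw [h]
  have hds : ∀ i, d i ^ 2 * s i ≤ 1 := by
    intro i
    by_cases h : s i = 0
    · simp [hd, h]
    · have hpos : 0 < s i := lt_of_le_of_ne (hs0 i) (Ne.symm h)
      simp only [hd, if_pos h, ne_eq, not_false_iff]
      rw [← Real.rpow_natCast (s i ^ (-(1:ℝ)/2)) 2, ← Real.rpow_mul hpos.le]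
      norm_num
      rw [Real.rpow_neg_one]
      rw [inv_mul_cancel₀ h]
  -- expand quadratic form
  have key : v ⬝ᵥ (Dᵀ * M * D).mulVec v
      = ∑ i, ∑ j, (d i * v i) * (d j * v j) * M i j := by
    rw [hDd, Matrix.diagonal_transpose]
    simp only [dotProduct, Matrix.mulVec, Matrix.mul_diagonal,
      Matrix.diagonal_mul, Finset.mul_sum]
    refine Finset.sum_congr rfl fun i _ => Finset.sum_congr rfl fun j _ => ?_
    ring
  have hassoc : Dᵀ * Pᵀ * P * D = Dᵀ * M * D := by
    rw [hM, Matrix.mul_assoc (Dᵀ) (Pᵀ) P]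
  rw [hassoc, key]
  have step1 : ∑ i, ∑ j, (d i * v i) * (d j * v j) * M i j
      ≤ ∑ i, ∑ j, ((d i * v i)^2 + (d j * v j)^2) / 2 * |M i j| := by
    refine Finset.sum_le_sum fun i _ => Finset.sum_le_sum fun j _ => ?_
    calc (d i * v i) * (d j * v j) * M i j
        ≤ |(d i * v i) * (d j * v j) * M i j| := le_abs_self _
      _ = |d i * v i| * |d j * v j| * |M i j| := by rw [abs_mul, abs_mul]
      _ ≤ ((d i * v i)^2 + (d j * v j)^2) / 2 * |M i j| := by
          gcongr ?_ * |M i j|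
          nlinarith [sq_nonneg (|d i * v i| - |d j * v j|), sq_abs (d i * v i), sq_abs (d j * v j), abs_nonneg (d i * v i), abs_nonneg (d j * v j)]
  have step2 : ∑ i, ∑ j, ((d i * v i)^2 + (d j * v j)^2) / 2 * |M i j|
      = ∑ i, (d i * v i)^2 * s i := by
    have hsplit : ∀ i j : Fin m, ((d i * v i)^2 + (d j * v j)^2) / 2 * |M i j|
        = (d i * v i)^2 / 2 * |M i j| + (d j * v j)^2 / 2 * |M i j| := by
      intro i j; ring
    simp_rw [hsplit, Finset.sum_add_distrib]
    rw [Finset.sum_comm (f := fun i j => (d j * v j)^2 / 2 * |M i j|)]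
    simp_rw [fun i j => congrArg abs (hMsymm j i)]
    rw [← Finset.sum_add_distrib]
    refine Finset.sum_congr rfl fun i _ => ?_
    rw [← Finset.sum_add_distrib]
    rw [hs, Finset.mul_sum]
    refine Finset.sum_congr rfl fun j _ => ?_
    ring
  have step3 : ∑ i, (d i * v i)^2 * s i ≤ ∑ i, (v i)^2 := by
    refine Finset.sum_le_sum fun i _ => ?_
    have : (d i * v i)^2 * s i = (d i ^ 2 * s i) * (v i)^2 := by ring
    rw [this]
    have := hds i
    nlinarith [sq_nonneg (v i), mul_nonneg (mul_nonneg (sq_nonneg (d i)) (hs0 i)) (sq_nonneg (v i))]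
  linarith
end

section
/- (Fully-Connected AOL Layers) Let P be a real n×m matrix and let D be the m×m diagonal matrix with D_ii = (∑_{j=1}^m |(PᵀP)_{ij}|)^{-1/2} when ∑_{j=1}^m |(PᵀP)_{ij}| ≠ 0, and D_ii = 0 otherwise. Set W = PD. Then for every b ∈ ℝ^n, the affine map f : ℝ^m → ℝ^n given by f(x) = Wx + b is 1-Lipschitz with respect to the Euclidean norms: ‖f(x) − f(y)‖₂ ≤ ‖x − y‖₂ for all x, y ∈ ℝ^m. -/
open Matrix BigOperators

private lemma aol_key {n m : ℕ} (P : Matrix (Fin n) (Fin m) ℝ) (v : Fin m → ℝ)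
    (d : Fin m → ℝ)
    (hd : d = fun i => if (∑ j, |(Pᵀ * P) i j|) ≠ 0
        then (∑ j, |(Pᵀ * P) i j|) ^ (-(1 : ℝ) / 2) else 0) :
    ∑ i, (∑ j, P i j * (d j * v j)) ^ 2 ≤ ∑ j, v j ^ 2 := by
  set M : Matrix (Fin m) (Fin m) ℝ := Pᵀ * P with hM
  set s : Fin m → ℝ := fun i => ∑ j, |M i j| with hs
  set a : Fin m → ℝ := fun j => d j * v j with ha
  have hMapp : ∀ j k, M j k = ∑ i, P i j * P i k := by
    intro j k
    simp [hM, Matrix.mul_apply, Matrix.transpose_apply]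
  have hMsymm : ∀ j k, M j k = M k j := by
    intro j k; rw [hMapp, hMapp]; exact Finset.sum_congr rfl fun i _ => mul_comm _ _
  have hs_nonneg : ∀ j, 0 ≤ s j := fun j => Finset.sum_nonneg fun k _ => abs_nonneg _
  have hd_nonneg : ∀ j, 0 ≤ d j := by
    intro j; rw [hd]; dsimp only
    split_ifs with h
    · exact Real.rpow_nonneg (hs_nonneg j) _
    · exact le_refl 0
  -- d j ^ 2 * s j ≤ 1
  have hkey : ∀ j, d j ^ 2 * s j ≤ 1 := by
    intro j; rw [hd]; dsimp only
    split_ifs with h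
    · have hpos : 0 < s j := lt_of_le_of_ne (hs_nonneg j) (Ne.symm h)
      rw [← Real.rpow_natCast (s j ^ (-(1:ℝ)/2)) 2, ← Real.rpow_mul (hs_nonneg j)]
      norm_num
      rw [Real.rpow_neg_one]
      rw [inv_mul_cancel₀ h]
    · simp
  -- expand the square
  have expand : ∑ i, (∑ j, P i j * a j) ^ 2
      = ∑ j, ∑ k, M j k * (a j * a k) := by
    calc ∑ i, (∑ j, P i j * a j) ^ 2
        = ∑ i, ∑ j, ∑ k, (P i j * P i k) * (a j * a k) := by
          refine Finset.sum_congr rfl fun i _ => ?_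
          rw [sq, Finset.sum_mul_sum]
          exact Finset.sum_congr rfl fun j _ =>
            Finset.sum_congr rfl fun k _ => by ring
      _ = ∑ j, ∑ i, ∑ k, (P i j * P i k) * (a j * a k) := Finset.sum_comm
      _ = ∑ j, ∑ k, ∑ i, (P i j * P i k) * (a j * a k) := by
          exact Finset.sum_congr rfl fun j _ => Finset.sum_comm
      _ = ∑ j, ∑ k, M j k * (a j * a k) := by
          refine Finset.sum_congr rfl fun j _ => Finset.sum_congr rfl fun k _ => ?_
          rw [hMapp, Finset.sum_mul]
  rw [expand]
  -- bound by absolute values and AM-GM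
  have step1 : ∑ j, ∑ k, M j k * (a j * a k)
      ≤ ∑ j, ∑ k, |M j k| * ((a j ^ 2 + a k ^ 2) / 2) := by
    refine Finset.sum_le_sum fun j _ => Finset.sum_le_sum fun k _ => ?_
    have h1 : M j k * (a j * a k) ≤ |M j k| * |a j * a k| := by
      calc M j k * (a j * a k) ≤ |M j k * (a j * a k)| := le_abs_self _
        _ = |M j k| * |a j * a k| := abs_mul _ _
    refine h1.trans ?_
    refine mul_le_mul_of_nonneg_left ?_ (abs_nonneg _)
    rw [abs_mul]
    have := abs_nonneg (a j)
    have := abs_nonneg (a k)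
    nlinarith [sq_nonneg (|a j| - |a k|), sq_abs (a j), sq_abs (a k)]
  refine (step1.trans ?_)
  -- simplify using symmetry
  have step2 : ∑ j, ∑ k, |M j k| * ((a j ^ 2 + a k ^ 2) / 2)
      = ∑ j, s j * a j ^ 2 := by
    have e1 : ∑ j, ∑ k, |M j k| * (a j ^ 2) = ∑ j, s j * a j ^ 2 := by
      refine Finset.sum_congr rfl fun j _ => ?_
      rw [hs, ← Finset.sum_mul]
    have e2 : ∑ j, ∑ k, |M j k| * (a k ^ 2) = ∑ j, s j * a j ^ 2 := by
      rw [Finset.sum_comm]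
      refine Finset.sum_congr rfl fun k _ => ?_
      rw [hs, ← Finset.sum_mul]
      congr 1
      exact Finset.sum_congr rfl fun j _ => by rw [hMsymm]
    calc ∑ j, ∑ k, |M j k| * ((a j ^ 2 + a k ^ 2) / 2)
        = (∑ j, ∑ k, |M j k| * (a j ^ 2) + ∑ j, ∑ k, |M j k| * (a k ^ 2)) / 2 := by
          rw [← Finset.sum_add_distrib, Finset.sum_div]
          refine Finset.sum_congr rfl fun j _ => ?_
          rw [← Finset.sum_add_distrib, Finset.sum_div]
          exact Finset.sum_congr rfl fun k _ => by ring
      _ = ∑ j, s j * a j ^ 2 := by rw [e1, e2]; ring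
  rw [step2]
  -- final bound
  refine Finset.sum_le_sum fun j _ => ?_
  have : s j * a j ^ 2 = (d j ^ 2 * s j) * v j ^ 2 := by rw [ha]; ring
  rw [this]
  have h1 : (d j ^ 2 * s j) * v j ^ 2 ≤ 1 * v j ^ 2 :=
    mul_le_mul_of_nonneg_right (hkey j) (sq_nonneg _)
  linarith

/-- **Fully-connected AOL layers.** With `W = P D` for the AOL rescaling
matrix `D` of `P`, the affine map `f x = W x + b` is `1`-Lipschitz with
respect to the Euclidean norms: `‖f x − f y‖₂ ≤ ‖x − y‖₂` for all `x, y`. -/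
theorem aol_fully_connected_layer_one_lipschitz {n m : ℕ}
    (P : Matrix (Fin n) (Fin m) ℝ)
    (D : Matrix (Fin m) (Fin m) ℝ)
    (hD : D = Matrix.diagonal (fun i =>
      if (∑ j, |(Pᵀ * P) i j|) ≠ 0
        then (∑ j, |(Pᵀ * P) i j|) ^ (-(1 : ℝ) / 2)
        else 0))
    (W : Matrix (Fin n) (Fin m) ℝ) (hW : W = P * D)
    (b : Fin n → ℝ)
    (f : (Fin m → ℝ) → (Fin n → ℝ)) (hf : ∀ x, f x = W.mulVec x + b) :
    ∀ x y : Fin m → ℝ,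
      Real.sqrt (∑ i, (f x i - f y i) ^ 2) ≤ Real.sqrt (∑ i, (x i - y i) ^ 2) := by
  intro x y
  apply Real.sqrt_le_sqrt
  set d : Fin m → ℝ := fun i => if (∑ j, |(Pᵀ * P) i j|) ≠ 0
      then (∑ j, |(Pᵀ * P) i j|) ^ (-(1 : ℝ) / 2) else 0 with hd
  have hWapp : ∀ i j, W i j = P i j * d j := by
    intro i j
    rw [hW, hD, Matrix.mul_diagonal]
  have hdiff : ∀ i, f x i - f y i = ∑ j, P i j * (d j * (x j - y j)) := by
    intro i
    simp only [hf, Pi.add_apply, Matrix.mulVec, dotProduct]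
    rw [add_sub_add_right_eq_sub, ← Finset.sum_sub_distrib]
    refine Finset.sum_congr rfl fun j _ => ?_
    rw [hWapp]; ring
  calc ∑ i, (f x i - f y i) ^ 2
      = ∑ i, (∑ j, P i j * (d j * (x j - y j))) ^ 2 := by
        exact Finset.sum_congr rfl fun i _ => by rw [hdiff]
    _ ≤ ∑ j, (x j - y j) ^ 2 := aol_key P (fun j => x j - y j) d hd
end

section
/- Let P be a real n×m matrix and let D be the m×m diagonal matrix with D_ii = (∑_{j=1}^m |(PᵀP)_{ij}|)^{-1/2} when ∑_{j=1}^m |(PᵀP)_{ij}| ≠ 0, and D_ii = 0 otherwise. Then every column of the rescaled matrix W = PD has Euclidean norm at most 1: for each i, ∑_{j=1}^n W_{ji}² ≤ 1. -/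
open Matrix BigOperators

/-- Every column of the AOL-rescaled matrix `W = P D` has Euclidean norm at
most `1`: for each column index `i`, `∑ j, (W j i)^2 ≤ 1`. -/
theorem aol_columns_norm_le_one {n m : ℕ}
    (P : Matrix (Fin n) (Fin m) ℝ)
    (D : Matrix (Fin m) (Fin m) ℝ)
    (hD : D = Matrix.diagonal (fun i =>
      if (∑ j, |(Pᵀ * P) i j|) ≠ 0
        then (∑ j, |(Pᵀ * P) i j|) ^ (-(1 : ℝ) / 2)
        else 0))
    (W : Matrix (Fin n) (Fin m) ℝ) (hW : W = P * D) :
    ∀ i : Fin m, ∑ j, (W j i) ^ 2 ≤ 1 := by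
  intro i
  subst hD hW
  set s : ℝ := ∑ j, |(Pᵀ * P) i j| with hs
  have hW' : ∀ j, (P * Matrix.diagonal (fun i =>
      if (∑ j, |(Pᵀ * P) i j|) ≠ 0
        then (∑ j, |(Pᵀ * P) i j|) ^ (-(1 : ℝ) / 2)
        else 0)) j i = P j i * (if s ≠ 0 then s ^ (-(1:ℝ)/2) else 0) := by
    intro j
    rw [Matrix.mul_diagonal]
  simp only [hW']
  by_cases h : s = 0
  · simp [h]
  · simp only [h, if_neg, ne_eq, not_false_iff, if_true]
    have hsnn : 0 ≤ s := Finset.sum_nonneg fun j _ => abs_nonneg _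
    have hspos : 0 < s := lt_of_le_of_ne hsnn (Ne.symm h)
    have hcol : ∑ j, P j i ^ 2 = (Pᵀ * P) i i := by
      simp [Matrix.mul_apply, Matrix.transpose_apply, sq]
    have hle : (Pᵀ * P) i i ≤ s := by
      calc (Pᵀ * P) i i ≤ |(Pᵀ * P) i i| := le_abs_self _
        _ ≤ s := Finset.single_le_sum (f := fun j => |(Pᵀ * P) i j|)
            (fun j _ => abs_nonneg _) (Finset.mem_univ i)
    have hpow : (s ^ (-(1:ℝ)/2)) ^ 2 = s⁻¹ := by
      rw [← Real.rpow_natCast (s ^ (-(1:ℝ)/2)) 2, ← Real.rpow_mul hsnn]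
      norm_num
      exact Real.rpow_neg_one s
    calc ∑ j, (P j i * s ^ (-(1:ℝ)/2)) ^ 2
        = (∑ j, P j i ^ 2) * (s ^ (-(1:ℝ)/2)) ^ 2 := by
          rw [Finset.sum_mul]; congr 1; ext j; ring
      _ = (Pᵀ * P) i i * s⁻¹ := by rw [hcol, hpow]
      _ ≤ s * s⁻¹ := by
          apply mul_le_mul_of_nonneg_right hle (inv_nonneg.mpr hsnn)
      _ = 1 := mul_inv_cancel₀ h
end

section
/- Let k, n, c_I, c_O be positive integers, m = n + k − 1, and let P ∈ ℝ^{k×k×c_I×c_O} be a convolution kernel, extended by zero: P̃^{(a,b)}_{p,q} = P^{(a,b)}_{p,q} for 0 ≤ p,q ≤ k−1 and 0 otherwise. Define the matrix J of the maximally padded convolution, with rows indexed by (b, i₂, j₂) ∈ {1..c_O}×{1..m}×{1..m} and columns indexed by (a, i₁, j₁) ∈ {1..c_I}×{1..n}×{1..n}, by J^{(b,a)}_{(i₂,j₂),(i₁,j₁)} = P̃^{(a,b)}_{i₁−i₂+k−1, j₁−j₂+k−1}. Then for all channel indices a₁, a₂ and positions (i₁,j₁), (i₂,j₂) ∈ {1..n}²,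 the Gram matrix satisfies [JᵀJ]^{(a₁,a₂)}_{(i₁,j₁),(i₂,j₂)} = ∑_{i=0}^{k−1} ∑_{j=0}^{k−1} ∑_{b=1}^{c_O} P̃^{(a₁,b)}_{i,j} · P̃^{(a₂,b)}_{i+i₂−i₁, j+j₂−j₁}, i.e. the entries of JᵀJ at spatial offset (i₂−i₁, j₂−j₁) are given by the channel-summed cross-correlation of the kernel with itself. -/
open Matrix BigOperators

/-- Zero-extension of a `k × k` convolution kernel `P` (with `c_I` input and
`c_O` output channels): `zext P a b p q = P^{(a,b)}_{p,q}` for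
`0 ≤ p, q ≤ k − 1`, and `0` otherwise. -/
noncomputable def zext {k cI cO : ℕ} (P : Fin k → Fin k → Fin cI → Fin cO → ℝ)
    (a : Fin cI) (b : Fin cO) (p q : ℤ) : ℝ :=
  if h : 0 ≤ p ∧ p < (k : ℤ) ∧ 0 ≤ q ∧ q < (k : ℤ) then
    P ⟨p.toNat, by omega⟩ ⟨q.toNat, by omega⟩ a b
  else 0

/-- Jacobian of the maximally padded 2D multi-channel convolution with kernel
`P`: rows are indexed by `(b, i₂, j₂)` with spatial indices ranging over an
`(n+k−1) × (n+k−1)` output grid, columns by `(a, i₁, j₁)` over the `n × n`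
input grid, and `J (b,i₂,j₂) (a,i₁,j₁) = P̃^{(a,b)}_{i₁−i₂+k−1, j₁−j₂+k−1}`. -/
noncomputable def convJacobian (k n cI cO : ℕ)
    (P : Fin k → Fin k → Fin cI → Fin cO → ℝ) :
    Matrix (Fin cO × Fin (n + k - 1) × Fin (n + k - 1)) (Fin cI × Fin n × Fin n) ℝ :=
  fun out inp =>
    zext P inp.1 out.1
      ((inp.2.1 : ℤ) - (out.2.1 : ℤ) + (k : ℤ) - 1)
      ((inp.2.2 : ℤ) - (out.2.2 : ℤ) + (k : ℤ) - 1)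

lemma zext_zero_left {k cI cO : ℕ} (P : Fin k → Fin k → Fin cI → Fin cO → ℝ)
    (a : Fin cI) (b : Fin cO) {p : ℤ} (q : ℤ) (h : ¬ (0 ≤ p ∧ p < (k : ℤ))) :
    zext P a b p q = 0 := by
  rw [zext, dif_neg]; tauto

lemma zext_zero_right {k cI cO : ℕ} (P : Fin k → Fin k → Fin cI → Fin cO → ℝ)
    (a : Fin cI) (b : Fin cO) (p : ℤ) {q : ℤ} (h : ¬ (0 ≤ q ∧ q < (k : ℤ))) :
    zext P a b p q = 0 := by
  rw [zext, dif_neg]; tauto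

lemma reindex_aux {n k : ℕ} (hk : 0 < k) (g : ℤ → ℝ)
    (hg : ∀ p : ℤ, ¬ (0 ≤ p ∧ p < (k:ℤ)) → g p = 0) (i₁ : Fin n) :
    ∑ i : Fin (n + k - 1), g ((i₁:ℤ) - (i:ℤ) + (k:ℤ) - 1) = ∑ p : Fin k, g (p:ℤ) := by
  have hi₁ := i₁.isLt
  set e : Fin k → Fin (n + k - 1) := fun p => ⟨(i₁:ℕ) + (k - 1 - (p:ℕ)), by
    have := p.isLt; omega⟩ with he
  have hinj : Function.Injective e := by
    intro p p' h
    have := p.isLt; have := p'.isLt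
    have h' : (i₁:ℕ) + (k - 1 - (p:ℕ)) = (i₁:ℕ) + (k - 1 - (p':ℕ)) := congrArg Fin.val h
    exact Fin.ext (by omega)
  rw [show (Finset.univ : Finset (Fin (n+k-1))) =
      Finset.univ.image e ∪ (Finset.univ \ Finset.univ.image e) by
    simp [Finset.union_sdiff_of_subset]]
  rw [Finset.sum_union (Finset.disjoint_sdiff)]
  have h2 : ∑ i ∈ Finset.univ \ Finset.univ.image e, g ((i₁:ℤ) - (i:ℤ) + (k:ℤ) - 1) = 0 := by
    apply Finset.sum_eq_zero
    intro i hi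
    simp only [Finset.mem_sdiff, Finset.mem_image, Finset.mem_univ, true_and] at hi
    apply hg
    intro ⟨h1, h2⟩
    apply hi
    refine ⟨⟨((i₁:ℤ) - (i:ℤ) + (k:ℤ) - 1).toNat, by omega⟩, ?_⟩
    apply Fin.ext
    simp only [e]
    have := i.isLt
    omega
  rw [h2, add_zero, Finset.sum_image (fun p _ p' _ h => hinj h)]
  apply Finset.sum_congr rfl
  intro p _
  congr 1
  have := p.isLt
  simp only [e]
  push_cast
  omega

/-- The Gram matrix `JᵀJ` of the maximally padded convolution is given by the
channel-summed cross-correlation of the kernel with itself at spatial offset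
`(i₂ − i₁, j₂ − j₁)`. -/
theorem conv_gram_eq_self_correlation {k n cI cO : ℕ}
    (hk : 0 < k) (hn : 0 < n) (hcI : 0 < cI) (hcO : 0 < cO)
    (P : Fin k → Fin k → Fin cI → Fin cO → ℝ)
    (J : Matrix (Fin cO × Fin (n + k - 1) × Fin (n + k - 1)) (Fin cI × Fin n × Fin n) ℝ)
    (hJ : J = convJacobian k n cI cO P) :
    ∀ (a₁ a₂ : Fin cI) (i₁ j₁ i₂ j₂ : Fin n),
      (Jᵀ * J) (a₁, i₁, j₁) (a₂, i₂, j₂) =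
        ∑ i : Fin k, ∑ j : Fin k, ∑ b : Fin cO,
          zext P a₁ b (i : ℤ) (j : ℤ) *
            zext P a₂ b ((i : ℤ) + (i₂ : ℤ) - (i₁ : ℤ)) ((j : ℤ) + (j₂ : ℤ) - (j₁ : ℤ)) := by
  intro a₁ a₂ i₁ j₁ i₂ j₂
  subst hJ
  rw [Matrix.mul_apply]
  simp only [Matrix.transpose_apply, convJacobian]
  rw [Fintype.sum_prod_type]
  have key : ∀ b : Fin cO,
      (∑ x : Fin (n+k-1) × Fin (n+k-1),
        zext P a₁ b ((i₁:ℤ) - (x.1:ℤ) + (k:ℤ) - 1) ((j₁:ℤ) - (x.2:ℤ) + (k:ℤ) - 1) *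
        zext P a₂ b ((i₂:ℤ) - (x.1:ℤ) + (k:ℤ) - 1) ((j₂:ℤ) - (x.2:ℤ) + (k:ℤ) - 1)) =
      ∑ i : Fin k, ∑ j : Fin k,
        zext P a₁ b (i:ℤ) (j:ℤ) *
        zext P a₂ b ((i:ℤ) + (i₂:ℤ) - (i₁:ℤ)) ((j:ℤ) + (j₂:ℤ) - (j₁:ℤ)) := by
    intro b
    rw [Fintype.sum_prod_type]
    have hstep : ∀ (i j : Fin (n+k-1)),
        zext P a₁ b ((i₁:ℤ) - (i:ℤ) + (k:ℤ) - 1) ((j₁:ℤ) - (j:ℤ) + (k:ℤ) - 1) *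
        zext P a₂ b ((i₂:ℤ) - (i:ℤ) + (k:ℤ) - 1) ((j₂:ℤ) - (j:ℤ) + (k:ℤ) - 1) =
        (fun p q => zext P a₁ b p q * zext P a₂ b (p + (i₂:ℤ) - (i₁:ℤ)) (q + (j₂:ℤ) - (j₁:ℤ)))
          ((i₁:ℤ) - (i:ℤ) + (k:ℤ) - 1) ((j₁:ℤ) - (j:ℤ) + (k:ℤ) - 1) := by
      intro i j
      simp only
      congr 2 <;> ring
    simp only [hstep]
    rw [reindex_aux hk
      (fun p => ∑ j : Fin (n+k-1),
        zext P a₁ b p ((j₁:ℤ) - (j:ℤ) + (k:ℤ) - 1) *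
        zext P a₂ b (p + (i₂:ℤ) - (i₁:ℤ)) (((j₁:ℤ) - (j:ℤ) + (k:ℤ) - 1) + (j₂:ℤ) - (j₁:ℤ)))
      (fun p hp => Finset.sum_eq_zero fun j _ => by
        rw [zext_zero_left P a₁ b _ hp, zero_mul]) i₁]
    refine Finset.sum_congr rfl fun p _ => ?_
    rw [reindex_aux hk
      (fun q => zext P a₁ b (p:ℤ) q *
        zext P a₂ b ((p:ℤ) + (i₂:ℤ) - (i₁:ℤ)) (q + (j₂:ℤ) - (j₁:ℤ)))
      (fun q hq => by simp only [zext_zero_right P a₁ b _ hq, zero_mul]) j₁]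
  calc (∑ b : Fin cO, ∑ x : Fin (n+k-1) × Fin (n+k-1),
        zext P a₁ b ((i₁:ℤ) - (x.1:ℤ) + (k:ℤ) - 1) ((j₁:ℤ) - (x.2:ℤ) + (k:ℤ) - 1) *
        zext P a₂ b ((i₂:ℤ) - (x.1:ℤ) + (k:ℤ) - 1) ((j₂:ℤ) - (x.2:ℤ) + (k:ℤ) - 1))
      = ∑ b : Fin cO, ∑ i : Fin k, ∑ j : Fin k,
        zext P a₁ b (i:ℤ) (j:ℤ) *
        zext P a₂ b ((i:ℤ) + (i₂:ℤ) - (i₁:ℤ)) ((j:ℤ) + (j₂:ℤ) - (j₁:ℤ)) :=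
        Finset.sum_congr rfl fun b _ => key b
    _ = _ := by
        rw [Finset.sum_comm]
        exact Finset.sum_congr rfl fun i _ => Finset.sum_comm
end

section
/- Let k, n, c_I, c_O be positive integers, m = n + k − 1, P ∈ ℝ^{k×k×c_I×c_O} a convolution kernel with zero-extension P̃, and J the matrix of the maximally padded convolution defined by J^{(b,a)}_{(i₂,j₂),(i₁,j₁)} = P̃^{(a,b)}_{i₁−i₂+k−1, j₁−j₂+k−1}. For each channel c ∈ {1..c_I} set S_c = ∑_{Δi=−(k−1)}^{k−1} ∑_{Δj=−(k−1)}^{k−1} ∑_{a=1}^{c_I} | ∑_{i,j} ∑_{b=1}^{c_O} P̃^{(a,b)}_{i,j} P̃^{(c,b)}_{i+Δi, j+Δj} |. Then for every channel c and every position (i₁,j₁) ∈ {1..n}², the column sum of absolute values of the Gram matrix satisfies ∑_{a₂=1}^{c_I} ∑_{i₂=1}^{n} ∑_{j₂=1}^{n} | [JᵀJ]^{(c,a₂)}_{(i₁,j₁),(i₂,j₂)} | ≤ S_c. -/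
open Matrix BigOperators

lemma zext_eq_zero {k cI cO : ℕ} (P : Fin k → Fin k → Fin cI → Fin cO → ℝ)
    (a : Fin cI) (b : Fin cO) (p q : ℤ)
    (h : ¬(0 ≤ p ∧ p < (k : ℤ) ∧ 0 ≤ q ∧ q < (k : ℤ))) : zext P a b p q = 0 :=
  dif_neg h

lemma oneD_bound {n k : ℕ} (g : ℤ → ℝ) (hg : ∀ x, 0 ≤ g x)
    (h0 : ∀ x, x ∉ Finset.Icc (-(k : ℤ) + 1) ((k : ℤ) - 1) → g x = 0) (i₁ : Fin n) :
    ∑ i₂ : Fin n, g ((i₁ : ℤ) - (i₂ : ℤ)) ≤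
      ∑ x ∈ Finset.Icc (-(k : ℤ) + 1) ((k : ℤ) - 1), g x := by
  classical
  have hinj : ∀ a ∈ (Finset.univ : Finset (Fin n)), ∀ b ∈ (Finset.univ : Finset (Fin n)),
      ((i₁ : ℤ) - (a : ℤ) = (i₁ : ℤ) - (b : ℤ)) → a = b := by
    intro a _ b _ h
    have : (a : ℕ) = (b : ℕ) := by omega
    exact Fin.ext this
  have h1 : ∑ i₂ : Fin n, g ((i₁ : ℤ) - (i₂ : ℤ))
      = ∑ x ∈ (Finset.univ : Finset (Fin n)).image (fun i₂ : Fin n => (i₁ : ℤ) - (i₂ : ℤ)), g x :=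
    (Finset.sum_image hinj).symm
  rw [h1]
  set T := (Finset.univ : Finset (Fin n)).image (fun i₂ : Fin n => (i₁ : ℤ) - (i₂ : ℤ)) with hT
  have h2 : ∑ x ∈ T, g x = ∑ x ∈ T ∩ Finset.Icc (-(k : ℤ) + 1) ((k : ℤ) - 1), g x := by
    refine (Finset.sum_subset Finset.inter_subset_left ?_).symm
    intro x hx hx'
    refine h0 x fun hxI => hx' (Finset.mem_inter.mpr ⟨hx, hxI⟩)
  rw [h2]
  exact Finset.sum_le_sum_of_subset_of_nonneg Finset.inter_subset_right (fun x _ _ => hg x)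

lemma gram_entry_eq {k n cI cO : ℕ} (hk : 0 < k) (hn : 0 < n)
    (P : Fin k → Fin k → Fin cI → Fin cO → ℝ)
    (c a : Fin cI) (i₁ j₁ i₂ j₂ : Fin n) :
    ((convJacobian k n cI cO P)ᵀ * convJacobian k n cI cO P) (c, i₁, j₁) (a, i₂, j₂)
    = ∑ i : Fin k, ∑ j : Fin k, ∑ b : Fin cO,
        zext P a b (i : ℤ) (j : ℤ) *
          zext P c b ((i : ℤ) + ((i₁ : ℤ) - (i₂ : ℤ))) ((j : ℤ) + ((j₁ : ℤ) - (j₂ : ℤ))) := by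
  classical
  rw [Matrix.mul_apply]
  simp only [Matrix.transpose_apply, convJacobian]
  rw [Fintype.sum_prod_type]
  have main : ∀ b : Fin cO,
      (∑ p : Fin (n + k - 1) × Fin (n + k - 1),
        zext P c b ((i₁ : ℤ) - (p.1 : ℤ) + (k : ℤ) - 1) ((j₁ : ℤ) - (p.2 : ℤ) + (k : ℤ) - 1) *
        zext P a b ((i₂ : ℤ) - (p.1 : ℤ) + (k : ℤ) - 1) ((j₂ : ℤ) - (p.2 : ℤ) + (k : ℤ) - 1))
      = ∑ q : Fin k × Fin k,
          zext P a b (q.1 : ℤ) (q.2 : ℤ) *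
            zext P c b ((q.1 : ℤ) + ((i₁ : ℤ) - (i₂ : ℤ))) ((q.2 : ℤ) + ((j₁ : ℤ) - (j₂ : ℤ))) := by
    intro b
    set F : Fin (n + k - 1) × Fin (n + k - 1) → ℝ := fun p =>
      zext P c b ((i₁ : ℤ) - (p.1 : ℤ) + (k : ℤ) - 1) ((j₁ : ℤ) - (p.2 : ℤ) + (k : ℤ) - 1) *
      zext P a b ((i₂ : ℤ) - (p.1 : ℤ) + (k : ℤ) - 1) ((j₂ : ℤ) - (p.2 : ℤ) + (k : ℤ) - 1) with hF
    have hi₂ := i₂.isLt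
    have hj₂ := j₂.isLt
    set e : Fin k × Fin k → Fin (n + k - 1) × Fin (n + k - 1) := fun q =>
      (⟨(i₂ : ℕ) + k - 1 - (q.1 : ℕ), by have := q.1.isLt; omega⟩,
       ⟨(j₂ : ℕ) + k - 1 - (q.2 : ℕ), by have := q.2.isLt; omega⟩) with he
    have hzero : ∀ p, p ∉ (Finset.univ : Finset (Fin k × Fin k)).image e → F p = 0 := by
      intro p hp
      by_contra hFp
      have h2 : zext P a b ((i₂ : ℤ) - (p.1 : ℤ) + (k : ℤ) - 1) ((j₂ : ℤ) - (p.2 : ℤ) + (k : ℤ) - 1) ≠ 0 := by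
        intro h
        exact hFp (by rw [hF]; simp [h])
      have hcond : 0 ≤ (i₂ : ℤ) - (p.1 : ℤ) + (k : ℤ) - 1 ∧ (i₂ : ℤ) - (p.1 : ℤ) + (k : ℤ) - 1 < (k : ℤ)
          ∧ 0 ≤ (j₂ : ℤ) - (p.2 : ℤ) + (k : ℤ) - 1 ∧ (j₂ : ℤ) - (p.2 : ℤ) + (k : ℤ) - 1 < (k : ℤ) := by
        by_contra hc
        exact h2 (zext_eq_zero P a b _ _ hc)
      apply hp
      refine Finset.mem_image.mpr ⟨(⟨(i₂ : ℕ) + k - 1 - (p.1 : ℕ), by omega⟩,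
        ⟨(j₂ : ℕ) + k - 1 - (p.2 : ℕ), by omega⟩), Finset.mem_univ _, ?_⟩
      rw [he]
      have hp1 := p.1.isLt
      have hp2 := p.2.isLt
      ext
      · simp only []
        omega
      · simp only []
        omega
    have hinj : ∀ x ∈ (Finset.univ : Finset (Fin k × Fin k)), ∀ y ∈ Finset.univ,
        e x = e y → x = y := by
      intro x _ y _ hxy
      rw [he] at hxy
      have h1 : ((i₂ : ℕ) + k - 1 - (x.1 : ℕ) : ℕ) = (i₂ : ℕ) + k - 1 - (y.1 : ℕ) :=
        congrArg Fin.val (congrArg Prod.fst hxy)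
      have h2 : ((j₂ : ℕ) + k - 1 - (x.2 : ℕ) : ℕ) = (j₂ : ℕ) + k - 1 - (y.2 : ℕ) :=
        congrArg Fin.val (congrArg Prod.snd hxy)
      have hx1 := x.1.isLt; have hx2 := x.2.isLt
      have hy1 := y.1.isLt; have hy2 := y.2.isLt
      have : (x.1 : ℕ) = y.1 ∧ (x.2 : ℕ) = y.2 := by omega
      exact Prod.ext (Fin.ext this.1) (Fin.ext this.2)
    calc ∑ p, F p = ∑ p ∈ (Finset.univ : Finset (Fin k × Fin k)).image e, F p :=
          (Finset.sum_subset (Finset.subset_univ _) (fun p _ hp => hzero p hp)).symm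
      _ = ∑ q : Fin k × Fin k, F (e q) := Finset.sum_image hinj
      _ = ∑ q : Fin k × Fin k,
            zext P a b (q.1 : ℤ) (q.2 : ℤ) *
              zext P c b ((q.1 : ℤ) + ((i₁ : ℤ) - (i₂ : ℤ))) ((q.2 : ℤ) + ((j₁ : ℤ) - (j₂ : ℤ))) := by
          apply Finset.sum_congr rfl
          intro q _
          rw [hF, he]
          have hq1 := q.1.isLt; have hq2 := q.2.isLt
          simp only []
          have A1 : (i₁ : ℤ) - (((i₂ : ℕ) + k - 1 - (q.1 : ℕ) : ℕ) : ℤ) + (k : ℤ) - 1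
              = (q.1 : ℤ) + ((i₁ : ℤ) - (i₂ : ℤ)) := by omega
          have A2 : (j₁ : ℤ) - (((j₂ : ℕ) + k - 1 - (q.2 : ℕ) : ℕ) : ℤ) + (k : ℤ) - 1
              = (q.2 : ℤ) + ((j₁ : ℤ) - (j₂ : ℤ)) := by omega
          have A3 : (i₂ : ℤ) - (((i₂ : ℕ) + k - 1 - (q.1 : ℕ) : ℕ) : ℤ) + (k : ℤ) - 1
              = (q.1 : ℤ) := by omega
          have A4 : (j₂ : ℤ) - (((j₂ : ℕ) + k - 1 - (q.2 : ℕ) : ℕ) : ℤ) + (k : ℤ) - 1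
              = (q.2 : ℤ) := by omega
          rw [A1, A2, A3, A4, mul_comm]
  calc (∑ b : Fin cO, ∑ p : Fin (n + k - 1) × Fin (n + k - 1),
        zext P c b ((i₁ : ℤ) - (p.1 : ℤ) + (k : ℤ) - 1) ((j₁ : ℤ) - (p.2 : ℤ) + (k : ℤ) - 1) *
        zext P a b ((i₂ : ℤ) - (p.1 : ℤ) + (k : ℤ) - 1) ((j₂ : ℤ) - (p.2 : ℤ) + (k : ℤ) - 1))
      = ∑ b : Fin cO, ∑ q : Fin k × Fin k,
          zext P a b (q.1 : ℤ) (q.2 : ℤ) *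
            zext P c b ((q.1 : ℤ) + ((i₁ : ℤ) - (i₂ : ℤ))) ((q.2 : ℤ) + ((j₁ : ℤ) - (j₂ : ℤ))) :=
        Finset.sum_congr rfl (fun b _ => main b)
    _ = ∑ q : Fin k × Fin k, ∑ b : Fin cO,
          zext P a b (q.1 : ℤ) (q.2 : ℤ) *
            zext P c b ((q.1 : ℤ) + ((i₁ : ℤ) - (i₂ : ℤ))) ((q.2 : ℤ) + ((j₁ : ℤ) - (j₂ : ℤ))) :=
        Finset.sum_comm
    _ = ∑ i : Fin k, ∑ j : Fin k, ∑ b : Fin cO,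
          zext P a b (i : ℤ) (j : ℤ) *
            zext P c b ((i : ℤ) + ((i₁ : ℤ) - (i₂ : ℤ))) ((j : ℤ) + ((j₁ : ℤ) - (j₂ : ℤ))) := by
        rw [Fintype.sum_prod_type]

lemma G_zero {k cI cO : ℕ}
    (P : Fin k → Fin k → Fin cI → Fin cO → ℝ) (c a : Fin cI) (Δi Δj : ℤ)
    (h : Δi ∉ Finset.Icc (-(k : ℤ) + 1) ((k : ℤ) - 1) ∨
         Δj ∉ Finset.Icc (-(k : ℤ) + 1) ((k : ℤ) - 1)) :
    (∑ i : Fin k, ∑ j : Fin k, ∑ b : Fin cO,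
      zext P a b (i : ℤ) (j : ℤ) * zext P c b ((i : ℤ) + Δi) ((j : ℤ) + Δj)) = 0 := by
  apply Finset.sum_eq_zero
  intro i _
  apply Finset.sum_eq_zero
  intro j _
  apply Finset.sum_eq_zero
  intro b _
  have hi := i.isLt
  have hj := j.isLt
  rw [zext_eq_zero P c b ((i : ℤ) + Δi) ((j : ℤ) + Δj) ?_, mul_zero]
  simp only [Finset.mem_Icc, not_and_or, not_le, not_lt] at h ⊢
  omega

/-- For each input channel `c`, the position-independent quantity `S c`
(the channel-summed absolute self-correlation of the kernel, summed over all
spatial offsets `(Δi, Δj) ∈ {−(k−1),…,k−1}²`) bounds the sum of absolute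
values of any row of the Gram matrix `JᵀJ` belonging to channel `c`. -/
theorem conv_gram_row_abs_sum_le {k n cI cO : ℕ}
    (hk : 0 < k) (hn : 0 < n) (hcI : 0 < cI) (hcO : 0 < cO)
    (P : Fin k → Fin k → Fin cI → Fin cO → ℝ)
    (J : Matrix (Fin cO × Fin (n + k - 1) × Fin (n + k - 1)) (Fin cI × Fin n × Fin n) ℝ)
    (hJ : J = convJacobian k n cI cO P)
    (S : Fin cI → ℝ)
    (hS : ∀ c, S c =
      ∑ Δi ∈ Finset.Icc (-(k : ℤ) + 1) ((k : ℤ) - 1),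
        ∑ Δj ∈ Finset.Icc (-(k : ℤ) + 1) ((k : ℤ) - 1),
          ∑ a : Fin cI,
            |∑ i : Fin k, ∑ j : Fin k, ∑ b : Fin cO,
              zext P a b (i : ℤ) (j : ℤ) * zext P c b ((i : ℤ) + Δi) ((j : ℤ) + Δj)|) :
    ∀ (c : Fin cI) (i₁ j₁ : Fin n),
      ∑ a₂ : Fin cI, ∑ i₂ : Fin n, ∑ j₂ : Fin n,
        |(Jᵀ * J) (c, i₁, j₁) (a₂, i₂, j₂)| ≤ S c := by
  intro c i₁ j₁
  subst hJ
  rw [hS]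
  set G : Fin cI → ℤ → ℤ → ℝ := fun a Δi Δj =>
    ∑ i : Fin k, ∑ j : Fin k, ∑ b : Fin cO,
      zext P a b (i : ℤ) (j : ℤ) * zext P c b ((i : ℤ) + Δi) ((j : ℤ) + Δj) with hG
  have hGzero : ∀ (a : Fin cI) (Δi Δj : ℤ),
      (Δi ∉ Finset.Icc (-(k : ℤ) + 1) ((k : ℤ) - 1) ∨
       Δj ∉ Finset.Icc (-(k : ℤ) + 1) ((k : ℤ) - 1)) → G a Δi Δj = 0 :=
    fun a Δi Δj h => G_zero P c a Δi Δj h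
  have hentry : ∀ (a : Fin cI) (i₂ j₂ : Fin n),
      ((convJacobian k n cI cO P)ᵀ * convJacobian k n cI cO P) (c, i₁, j₁) (a, i₂, j₂)
      = G a ((i₁ : ℤ) - (i₂ : ℤ)) ((j₁ : ℤ) - (j₂ : ℤ)) :=
    fun a i₂ j₂ => gram_entry_eq hk hn P c a i₁ j₁ i₂ j₂
  calc ∑ a₂ : Fin cI, ∑ i₂ : Fin n, ∑ j₂ : Fin n,
        |((convJacobian k n cI cO P)ᵀ * convJacobian k n cI cO P) (c, i₁, j₁) (a₂, i₂, j₂)|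
      = ∑ a₂ : Fin cI, ∑ i₂ : Fin n, ∑ j₂ : Fin n,
          |G a₂ ((i₁ : ℤ) - (i₂ : ℤ)) ((j₁ : ℤ) - (j₂ : ℤ))| := by
        refine Finset.sum_congr rfl fun a₂ _ => Finset.sum_congr rfl fun i₂ _ =>
          Finset.sum_congr rfl fun j₂ _ => ?_
        rw [hentry]
    _ ≤ ∑ a₂ : Fin cI, ∑ Δi ∈ Finset.Icc (-(k : ℤ) + 1) ((k : ℤ) - 1),
          ∑ Δj ∈ Finset.Icc (-(k : ℤ) + 1) ((k : ℤ) - 1), |G a₂ Δi Δj| := by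
        refine Finset.sum_le_sum fun a₂ _ => ?_
        calc ∑ i₂ : Fin n, ∑ j₂ : Fin n, |G a₂ ((i₁ : ℤ) - (i₂ : ℤ)) ((j₁ : ℤ) - (j₂ : ℤ))|
            ≤ ∑ i₂ : Fin n, ∑ Δj ∈ Finset.Icc (-(k : ℤ) + 1) ((k : ℤ) - 1),
                |G a₂ ((i₁ : ℤ) - (i₂ : ℤ)) Δj| := by
              refine Finset.sum_le_sum fun i₂ _ => ?_
              exact oneD_bound (fun Δj => |G a₂ ((i₁ : ℤ) - (i₂ : ℤ)) Δj|)
                (fun x => abs_nonneg _)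
                (fun x hx => by simp only [hGzero a₂ _ x (Or.inr hx), abs_zero]) j₁
          _ = ∑ Δj ∈ Finset.Icc (-(k : ℤ) + 1) ((k : ℤ) - 1),
                ∑ i₂ : Fin n, |G a₂ ((i₁ : ℤ) - (i₂ : ℤ)) Δj| := Finset.sum_comm
          _ ≤ ∑ Δj ∈ Finset.Icc (-(k : ℤ) + 1) ((k : ℤ) - 1),
                ∑ Δi ∈ Finset.Icc (-(k : ℤ) + 1) ((k : ℤ) - 1), |G a₂ Δi Δj| := by
              refine Finset.sum_le_sum fun Δj _ => ?_
              exact oneD_bound (fun Δi => |G a₂ Δi Δj|)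
                (fun x => abs_nonneg _)
                (fun x hx => by simp only [hGzero a₂ x Δj (Or.inl hx), abs_zero]) i₁
          _ = ∑ Δi ∈ Finset.Icc (-(k : ℤ) + 1) ((k : ℤ) - 1),
                ∑ Δj ∈ Finset.Icc (-(k : ℤ) + 1) ((k : ℤ) - 1), |G a₂ Δi Δj| := Finset.sum_comm
    _ = ∑ Δi ∈ Finset.Icc (-(k : ℤ) + 1) ((k : ℤ) - 1),
          ∑ Δj ∈ Finset.Icc (-(k : ℤ) + 1) ((k : ℤ) - 1),
            ∑ a₂ : Fin cI, |G a₂ Δi Δj| := by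
        rw [Finset.sum_comm]
        exact Finset.sum_congr rfl fun Δi _ => Finset.sum_comm
end

section
/- (Certified robustness from the margin) Let f : ℝ^n → ℝ^m be L-Lipschitz with respect to the Euclidean norms, let x ∈ ℝ^n, let y ∈ {1..m} be the true label, and let ε ≥ 0. If the margin satisfies f(x)_y − f(x)_i > √2 · L · ε for every i ≠ y, then for every perturbation δ ∈ ℝ^n with ‖δ‖₂ ≤ ε and every i ≠ y one has f(x+δ)_y > f(x+δ)_i; in particular the classifier C_f(x) = argmax_i f(x)_i assigns label y to every point x + δ with ‖δ‖₂ ≤ ε. -/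
open BigOperators

/-- **Certified robustness from the margin.** If `f : ℝ^n → ℝ^m` is
`L`-Lipschitz with respect to the Euclidean norms and at input `x` with true
label `y` the margin satisfies `f(x)_y − f(x)_i > √2·L·ε` for every `i ≠ y`,
then for every perturbation `δ` with `‖δ‖₂ ≤ ε` and every `i ≠ y` one has
`f(x+δ)_y > f(x+δ)_i`; in particular the classifier `argmax_i f(·)_i` assigns
label `y` to every point `x + δ` with `‖δ‖₂ ≤ ε`. -/
theorem certified_robustness_from_margin {n m : ℕ}
    (f : (Fin n → ℝ) → (Fin m → ℝ)) (L : ℝ) (hL : 0 ≤ L)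
    (hf : ∀ x z : Fin n → ℝ,
      Real.sqrt (∑ j, (f x j - f z j) ^ 2) ≤ L * Real.sqrt (∑ j, (x j - z j) ^ 2))
    (x : Fin n → ℝ) (y : Fin m) (ε : ℝ) (hε : 0 ≤ ε)
    (hmargin : ∀ i : Fin m, i ≠ y → Real.sqrt 2 * L * ε < f x y - f x i) :
    ∀ δ : Fin n → ℝ, Real.sqrt (∑ j, (δ j) ^ 2) ≤ ε →
      ∀ i : Fin m, i ≠ y → f (x + δ) i < f (x + δ) y := by
  intro δ hδ i hi
  set g : Fin m → ℝ := fun j => f (x + δ) j - f x j with hg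
  -- Lipschitz bound on the output difference
  have h1 : Real.sqrt (∑ j, (g j) ^ 2) ≤ L * ε := by
    have h := hf (x + δ) x
    have heq : (∑ j, ((x + δ) j - x j) ^ 2) = ∑ j, (δ j) ^ 2 := by
      apply Finset.sum_congr rfl
      intro j _
      simp [Pi.add_apply]
    rw [heq] at h
    exact h.trans (mul_le_mul_of_nonneg_left hδ hL)
  have hsumnn : 0 ≤ ∑ j, (g j) ^ 2 := Finset.sum_nonneg fun j _ => sq_nonneg _
  have h2 : (∑ j, (g j) ^ 2) ≤ (L * ε) ^ 2 := by
    have := Real.sq_sqrt hsumnn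
    nlinarith [Real.sqrt_nonneg (∑ j, (g j) ^ 2)]
  -- extract the two coordinates
  have h3 : (g y) ^ 2 + (g i) ^ 2 ≤ (L * ε) ^ 2 := by
    have hsub : ({y, i} : Finset (Fin m)) ⊆ Finset.univ := Finset.subset_univ _
    have hpair : ∑ j ∈ ({y, i} : Finset (Fin m)), (g j) ^ 2 = (g y) ^ 2 + (g i) ^ 2 :=
      Finset.sum_pair (Ne.symm hi)
    have := Finset.sum_le_sum_of_subset_of_nonneg hsub
      (fun j _ _ => sq_nonneg (g j))
    rw [hpair] at this
    exact this.trans h2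
  -- |g y| + |g i| ≤ √2 L ε
  have hs2 : (Real.sqrt 2) ^ 2 = 2 := Real.sq_sqrt (by norm_num)
  have hs2nn : (0:ℝ) ≤ Real.sqrt 2 := Real.sqrt_nonneg 2
  have habs : |g y| + |g i| ≤ Real.sqrt 2 * L * ε := by
    have hq : (|g y| + |g i|) ^ 2 ≤ (Real.sqrt 2 * L * ε) ^ 2 := by
      nlinarith [sq_nonneg (|g y| - |g i|), sq_abs (g y), sq_abs (g i)]
    have hnn : 0 ≤ Real.sqrt 2 * L * ε := by positivity
    nlinarith [abs_nonneg (g y), abs_nonneg (g i)]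
  have hm := hmargin i hi
  have e1 : -(|g y|) ≤ g y := neg_abs_le _
  have e2 : g i ≤ |g i| := le_abs_self _
  have hy : f (x + δ) y = f x y + g y := by simp [hg]
  have hxi : f (x + δ) i = f x i + g i := by simp [hg]
  rw [hy, hxi]
  linarith
end
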